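/- arXiv:1207.4572 — 2 statements merged into one kernel-verified Lean document; each statement's English description precedes it below -/
import Mathlib

section
/- The unique ℚ-bilinear bracket [-,-] on ℚH satisfying [[x],[y]] = ⟨x,y⟩·[x+y] for all x, y ∈ H is alternating (i.e., [X,X] = 0 for every X ∈ ℚH) and satisfies the Jacobi identity [[X,Y],Z] + [[Y,Z],X] + [[Z,X],Y] = 0 for all X, Y, Z ∈ ℚH; hence ℚH is a Lie algebra over ℚ. -/
/-!
Both claims are bilinear (resp. trilinear) identities, so they only need checking on the basis
`[x]`. There the bracket is alternating because `⟨-,-⟩` is, and the Jacobiator of `[x], [y], [z]`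
is `(a (b - c) + b (c - a) + c (a - b)) • [x + y + z] = 0`, where `a = ⟨x,y⟩`, `b = ⟨y,z⟩`,
`c = ⟨z,x⟩`, by bilinearity and antisymmetry of `⟨-,-⟩`.
-/

/-- `H g` is the first homology group of a surface of genus `g`:
the free ℤ-module `ℤ^g × ℤ^g` of rank `2g`. -/
abbrev H (g : ℕ) : Type := (Fin g → ℤ) × (Fin g → ℤ)

/-- The intersection form `⟨-,-⟩` on `H g`:
`⟨(a,b),(a',b')⟩ = ∑ i, (a i * b' i - a' i * b i)`. -/
def form {g : ℕ} (x y : H g) : ℤ := ∑ i, (x.1 i * y.2 i - y.1 i * x.2 i)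

/-- The ℚ-vector space with basis `{[x] : x ∈ H}`. -/
abbrev QH (g : ℕ) : Type := AddMonoidAlgebra ℚ (H g)

/-- The basis element `[x]` of `QH g` corresponding to `x : H g`. -/
noncomputable def e {g : ℕ} (x : H g) : QH g := AddMonoidAlgebra.single x 1

open AddMonoidAlgebra

/-- The summands are the cyclic permutations of `B.compr₂ B`, using
`(lflip ∘ₗ t).flip X Y Z = t Y Z X`. -/
noncomputable def LinearMap.jacobiator {R M : Type*} [CommSemiring R] [AddCommMonoid M]
    [Module R M] (B : M →ₗ[R] M →ₗ[R] M) : M →ₗ[R] M →ₗ[R] M →ₗ[R] M :=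
  let T := B.compr₂ B
  T + (LinearMap.lflip.toLinearMap ∘ₗ T).flip +
    (LinearMap.lflip.toLinearMap ∘ₗ (LinearMap.lflip.toLinearMap ∘ₗ T).flip).flip

theorem LinearMap.jacobiator_apply {R M : Type*} [CommSemiring R] [AddCommMonoid M] [Module R M]
    (B : M →ₗ[R] M →ₗ[R] M) (X Y Z : M) :
    B.jacobiator X Y Z = B (B X Y) Z + B (B Y Z) X + B (B Z X) Y :=
  rfl

namespace Module.Basis

variable {ι R M N : Type*} [CommSemiring R] [AddCommMonoid M] [Module R M] (b : Basis ι R M)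

theorem existsUnique_bilin_apply_eq [AddCommMonoid N] [Module R N] (f : ι → ι → N) :
    ∃! B : M →ₗ[R] M →ₗ[R] N, ∀ i j, B (b i) (b j) = f i j :=
  ⟨b.constr R fun i => b.constr R (f i), fun i j => by simp only [constr_basis],
    fun _ hB => LinearMap.ext_basis b b fun i j => by simp only [hB, constr_basis]⟩

theorem isAlt_of_apply_self_of_apply_swap [AddCommGroup N] [Module R N]
    {B : M →ₗ[R] M →ₗ[R] N} (h_self : ∀ i, B (b i) (b i) = 0)
    (h_swap : ∀ i j, B (b i) (b j) = -B (b j) (b i)) : B.IsAlt := by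
  have h_flip : B.flip = -B := LinearMap.ext_basis b b fun i j => by
    rw [LinearMap.flip_apply, LinearMap.neg_apply, LinearMap.neg_apply, h_swap]
  have h_comm (x y : M) : B y x = -B x y := by
    change B.flip x y = _
    rw [h_flip, LinearMap.neg_apply, LinearMap.neg_apply]
  intro x
  induction b.mem_span x using Submodule.span_induction with
  | mem _ hx => obtain ⟨i, rfl⟩ := hx; exact h_self i
  | zero => simp only [map_zero]
  | add x y _ _ hx hy => simp only [map_add, LinearMap.add_apply, hx, hy, h_comm x y]; abel
  | smul c x _ hx => simp only [map_smul, LinearMap.smul_apply, hx, smul_zero]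

theorem jacobi_of_apply_basis {B : M →ₗ[R] M →ₗ[R] M}
    (h : ∀ i j k, B (B (b i) (b j)) (b k) + B (B (b j) (b k)) (b i) + B (B (b k) (b i)) (b j) = 0)
    (X Y Z : M) : B (B X Y) Z + B (B Y Z) X + B (B Z X) Y = 0 := by
  have h_jacobiator : B.jacobiator = 0 := b.ext fun i => b.ext fun j => b.ext fun k => by
    rw [LinearMap.jacobiator_apply, h, LinearMap.zero_apply, LinearMap.zero_apply,
      LinearMap.zero_apply]
  rw [← LinearMap.jacobiator_apply, h_jacobiator]
  rfl

end Module.Basis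

theorem LinearMap.IsAlt.cyclic_mul_add_eq_zero {A : Type*} [AddCommGroup A]
    {ω : LinearMap.BilinForm ℤ A} (hω : LinearMap.IsAlt ω) (x y z : A) :
    ω x y * ω (x + y) z + ω y z * ω (y + z) x + ω z x * ω (z + x) y = 0 := by
  simp only [map_add, LinearMap.add_apply, ← hω.neg x z, ← hω.neg y x, ← hω.neg z y]
  ring

namespace AddMonoidAlgebra

variable {k A : Type*} [CommRing k] [AddCommGroup A]
  {ω : LinearMap.BilinForm ℤ A} (hω : LinearMap.IsAlt ω) {Br : k[A] →ₗ[k] k[A] →ₗ[k] k[A]}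
  (hBr : ∀ x y, Br (single x 1) (single y 1) = (ω x y : k) • single (x + y) 1)
include hω hBr

theorem isAlt_of_apply_single : Br.IsAlt := by
  refine (AddMonoidAlgebra.basis A k).isAlt_of_apply_self_of_apply_swap (fun x => ?_)
    fun x y => ?_
  · rw [basis_apply, hBr, hω.self_eq_zero, Int.cast_zero, zero_smul]
  · rw [basis_apply, basis_apply, hBr, hBr, ← hω.neg, add_comm, Int.cast_neg, neg_smul]

theorem jacobi_of_apply_single (X Y Z : k[A]) :
    Br (Br X Y) Z + Br (Br Y Z) X + Br (Br Z X) Y = 0 := by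
  refine (AddMonoidAlgebra.basis A k).jacobi_of_apply_basis (fun x y z => ?_) X Y Z
  simp only [basis_apply, hBr, map_smul, LinearMap.smul_apply, smul_smul]
  have key := congrArg (Int.cast : ℤ → k) (hω.cyclic_mul_add_eq_zero x y z)
  push_cast at key
  rw [show y + z + x = x + y + z by abel, show z + x + y = x + y + z by abel, ← add_smul,
    ← add_smul, key, zero_smul]

end AddMonoidAlgebra

noncomputable def formBilin (g : ℕ) : LinearMap.BilinForm ℤ (H g) :=
  LinearMap.mk₂ ℤ form
    (fun _ _ _ => by
      simp only [form, Prod.fst_add, Prod.snd_add, Pi.add_apply, ← Finset.sum_add_distrib]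
      exact Finset.sum_congr rfl fun _ _ => by ring)
    (fun _ _ _ => by
      simp only [form, Prod.smul_fst, Prod.smul_snd, Pi.smul_apply, smul_eq_mul, Finset.mul_sum]
      exact Finset.sum_congr rfl fun _ _ => by ring)
    (fun _ _ _ => by
      simp only [form, Prod.fst_add, Prod.snd_add, Pi.add_apply, ← Finset.sum_add_distrib]
      exact Finset.sum_congr rfl fun _ _ => by ring)
    (fun _ _ _ => by
      simp only [form, Prod.smul_fst, Prod.smul_snd, Pi.smul_apply, smul_eq_mul, Finset.mul_sum]
      exact Finset.sum_congr rfl fun _ _ => by ring)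

theorem formBilin_isAlt (g : ℕ) : LinearMap.IsAlt (formBilin g) := fun x => by
  simp only [formBilin, LinearMap.mk₂_apply, form, sub_self, Finset.sum_const_zero]

theorem goldman_bracket_unique_alternating_jacobi_general (g : ℕ) :
    (∃! Br : QH g →ₗ[ℚ] QH g →ₗ[ℚ] QH g,
        ∀ x y : H g, Br (e x) (e y) = (form x y : ℚ) • e (x + y)) ∧
    (∀ Br : QH g →ₗ[ℚ] QH g →ₗ[ℚ] QH g,
        (∀ x y : H g, Br (e x) (e y) = (form x y : ℚ) • e (x + y)) →
        (∀ X : QH g, Br X X = 0) ∧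
        (∀ X Y Z : QH g, Br (Br X Y) Z + Br (Br Y Z) X + Br (Br Z X) Y = 0)) :=
  ⟨(AddMonoidAlgebra.basis (H g) ℚ).existsUnique_bilin_apply_eq fun x y =>
      (form x y : ℚ) • e (x + y),
    fun _ hBr => ⟨isAlt_of_apply_single (formBilin_isAlt g) hBr,
      jacobi_of_apply_single (formBilin_isAlt g) hBr⟩⟩

/-- There is a unique ℚ-bilinear bracket on `ℚH` with `⁅[x],[y]⁆ = ⟨x,y⟩·[x+y]` for all
`x, y ∈ H`; it is alternating and satisfies the Jacobi identity, so `ℚH` is a Lie algebra. -/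
theorem goldman_bracket_unique_alternating_jacobi (g : ℕ) (hg : 1 ≤ g) :
    (∃! Br : QH g →ₗ[ℚ] QH g →ₗ[ℚ] QH g,
        ∀ x y : H g, Br (e x) (e y) = (form x y : ℚ) • e (x + y)) ∧
    (∀ Br : QH g →ₗ[ℚ] QH g →ₗ[ℚ] QH g,
        (∀ x y : H g, Br (e x) (e y) = (form x y : ℚ) • e (x + y)) →
        (∀ X : QH g, Br X X = 0) ∧
        (∀ X Y Z : QH g, Br (Br X Y) Z + Br (Br Y Z) X + Br (Br Z X) Y = 0)) :=
  goldman_bracket_unique_alternating_jacobi_general g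
end

section
/- Let n ≥ 1 and let S be a subset of ℤ^n (i.e., Fin n → ℤ) that generates ℤ^n as an additive monoid. Then the set S ∖ {0} of nonzero elements of S has at least n+1 elements. In particular, no ℤ-basis of ℤ^n generates ℤ^n as an additive monoid. -/
/-!
If a finite family `v` generates an abelian group as a monoid, then `-∑ i, v i` is an
`ℕ`-combination of the `v i`, which yields an integer relation with all coefficients positive;
so no such family is `ℤ`-linearly independent. On the other hand, over `ℤ`
(a ring with the Orzech property) a spanning family with at most `finrank` members is linearly
independent. Hence `S \ {0}` has more than `finrank ℤ M` elements.
-/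

open Module Submodule

theorem not_linearIndependent_int_of_addSubmonoid_closure_range_eq_top {ι M : Type*}
    [Fintype ι] [AddCommGroup M] [Nontrivial M] {v : ι → M}
    (hv : AddSubmonoid.closure (Set.range v) = ⊤) : ¬ LinearIndependent ℤ v := by
  intro hli
  obtain ⟨i⟩ : Nonempty ι := by
    by_contra h
    simp_all [Set.range_eq_empty]
  obtain ⟨c, hc⟩ := (mem_span_range_iff_exists_fun ℕ).mp <|
    (span_nat_eq_addSubmonoidClosure (Set.range v)).ge (hv.ge (AddSubmonoid.mem_top (-∑ i, v i)))
  have hrel : ∑ i, ((c i + 1 : ℕ) : ℤ) • v i = 0 := by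
    simp only [natCast_zsmul, add_smul, one_smul, Finset.sum_add_distrib, hc, neg_add_cancel]
  have hcoeff := Fintype.linearIndependent_iff.mp hli _ hrel i
  omega

theorem finrank_int_lt_encard_sdiff_zero_of_addSubmonoid_closure_eq_top {M : Type*}
    [AddCommGroup M] [Nontrivial M] {S : Set M} (hS : AddSubmonoid.closure S = ⊤) :
    (finrank ℤ M : ℕ∞) < (S \ {0}).encard := by
  by_contra! hle
  set T := S \ {0}
  have hT : T.Finite := Set.finite_of_encard_le_coe hle
  have : Fintype T := hT.fintype
  have hclosure : AddSubmonoid.closure (Set.range ((↑) : T → M)) = ⊤ := by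
    rw [Subtype.range_coe, AddSubmonoid.closure_sdiff_singleton_zero, hS]
  have hspan : ⊤ ≤ span ℤ (Set.range ((↑) : T → M)) :=
    hclosure.ge.trans (AddSubmonoid.closure_le.mpr subset_span)
  have hcard : Fintype.card T ≤ finrank ℤ M := by
    rwa [← Nat.cast_le (α := ℕ∞), ← Set.toFinset_card, ← Set.encard_eq_coe_toFinset_card]
  exact not_linearIndependent_int_of_addSubmonoid_closure_range_eq_top hclosure
    (linearIndependent_of_top_le_span_of_card_le_finrank hspan hcard)

/-- If `S ⊆ ℤ^n` generates `ℤ^n` as an additive monoid, then `S \ {0}` has at least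
`n+1` elements; in particular, no ℤ-basis of `ℤ^n` generates it as an additive monoid. -/
theorem monoid_generators_of_int_lattice (n : ℕ) (hn : 1 ≤ n) :
    (∀ S : Set (Fin n → ℤ), AddSubmonoid.closure S = ⊤ →
      ((n + 1 : ℕ) : ℕ∞) ≤ (S \ {0}).encard) ∧
    (∀ b : Module.Basis (Fin n) ℤ (Fin n → ℤ),
      AddSubmonoid.closure (Set.range ⇑b) ≠ ⊤) := by
  have : NeZero n := ⟨by omega⟩
  refine ⟨fun S hS => ?_, fun b hb =>
    not_linearIndependent_int_of_addSubmonoid_closure_range_eq_top hb b.linearIndependent⟩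
  have hlt := finrank_int_lt_encard_sdiff_zero_of_addSubmonoid_closure_eq_top hS
  rw [finrank_fin_fun] at hlt
  exact_mod_cast (ENat.add_one_le_iff (ENat.natCast_ne_top n)).mpr hlt
end
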